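/- In the Gaussian location model, any estimator sequence θ̂_n satisfying P_{n,0}(θ̂_n = 0) → 1 has maximal scaled mean squared error diverging to infinity: sup_{θ∈ℝ} E_{n,θ}[n(θ̂_n − θ)²] → ∞ as n → ∞. -/

import Mathlib

/-!
Take the alternative `θ = √(2c/n)`, at which the likelihood ratio `dP_{n,θ}/dP_{n,0}` has second
moment `exp (n θ²) = e^{2c}` under `P_{n,0}`. By Cauchy–Schwarz,
`P_{n,θ}(θ̂_n ≠ 0)² ≤ P_{n,0}(θ̂_n ≠ 0) · e^{2c} → 0`, so eventually `P_{n,θ}(θ̂_n = 0) ≥ 1/2`.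
On that event the scaled loss is `n θ² = 2c`, hence the maximal risk is at least `c`, for every `c`.
-/

open MeasureTheory ProbabilityTheory Filter Topology

/-- Joint law of a sample of size `n` of i.i.d. `N(θ,1)` observations. -/
noncomputable def gaussP (n : ℕ) (θ : ℝ) : Measure (Fin n → ℝ) :=
  Measure.pi fun _ => gaussianReal θ 1

open scoped ENNReal

instance isProbabilityMeasure_gaussP (n : ℕ) (θ : ℝ) : IsProbabilityMeasure (gaussP n θ) := by
  unfold gaussP; infer_instance

section Pi

variable {ι : Type*} [Fintype ι] {Ω : ι → Type*}

lemma prod_indicator_apply_eq_indicator_univ_pi {M : Type*} [CommMonoidWithZero M]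
    (s : ∀ i, Set (Ω i)) (f : ∀ i, Ω i → M) (y : ∀ i, Ω i) :
    ∏ i, (s i).indicator (f i) (y i) = (Set.univ.pi s).indicator (fun y => ∏ i, f i (y i)) y := by
  by_cases hy : y ∈ Set.univ.pi s
  · rw [Set.indicator_of_mem hy]
    exact Finset.prod_congr rfl fun i _ => Set.indicator_of_mem (hy i trivial) _
  · rw [Set.indicator_of_notMem hy]
    obtain ⟨i, hi⟩ := not_forall.mp (Set.mem_univ_pi.not.mp hy)
    exact Finset.prod_eq_zero (Finset.mem_univ i) (Set.indicator_of_notMem hi _)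

variable [∀ i, MeasurableSpace (Ω i)]

lemma lintegral_fintype_prod_eq_prod (μ : ∀ i, Measure (Ω i)) [∀ i, IsProbabilityMeasure (μ i)]
    {f : ∀ i, Ω i → ℝ≥0∞} (hf : ∀ i, Measurable (f i)) :
    ∫⁻ y, ∏ i, f i (y i) ∂Measure.pi μ = ∏ i, ∫⁻ x, f i x ∂μ i := by
  rw [lintegral_prod_eq_prod_lintegral_of_indepFun _ _
    (iIndepFun_pi fun i => (hf i).aemeasurable) fun i => (hf i).comp (measurable_pi_apply i)]
  exact Finset.prod_congr rfl fun i _ => (measurePreserving_eval μ i).lintegral_comp (hf i)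

lemma Measure.pi_withDensity (μ : ∀ i, Measure (Ω i)) [∀ i, IsProbabilityMeasure (μ i)]
    {f : ∀ i, Ω i → ℝ≥0∞} (hf : ∀ i, Measurable (f i)) (hf_fin : ∀ i, ∫⁻ x, f i x ∂μ i ≠ ∞) :
    Measure.pi (fun i => (μ i).withDensity (f i))
      = (Measure.pi μ).withDensity fun y => ∏ i, f i (y i) := by
  have := fun i => isFiniteMeasure_withDensity (hf_fin i)
  refine Measure.pi_eq fun s hs => ?_
  have hmeas := MeasurableSet.univ_pi hs
  rw [withDensity_apply _ hmeas, ← lintegral_indicator hmeas]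
  simp_rw [← prod_indicator_apply_eq_indicator_univ_pi]
  rw [lintegral_fintype_prod_eq_prod μ fun i => (hf i).indicator (hs i)]
  exact Finset.prod_congr rfl fun i _ => by
    rw [lintegral_indicator (hs i), withDensity_apply _ (hs i)]

end Pi

lemma withDensity_apply_sq_le {X : Type*} [MeasurableSpace X] (μ : Measure X) {f : X → ℝ≥0∞}
    (hf : AEMeasurable f μ) {s : Set X} (hs : MeasurableSet s) :
    μ.withDensity f s ^ 2 ≤ μ s * ∫⁻ x, f x ^ 2 ∂μ := by
  have holder := ENNReal.lintegral_mul_le_Lp_mul_Lq (μ.restrict s) Real.HolderConjugate.two_two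
    aemeasurable_const hf.restrict (f := fun _ => 1)
  simp only [Pi.mul_apply, one_mul, ENNReal.one_rpow, lintegral_const,
    Measure.restrict_apply_univ] at holder
  rw [withDensity_apply _ hs]
  calc (∫⁻ x in s, f x ∂μ) ^ 2
      ≤ ((μ s) ^ (1 / 2 : ℝ) * (∫⁻ x in s, f x ^ (2 : ℝ) ∂μ) ^ (1 / 2 : ℝ)) ^ 2 := by gcongr
    _ = μ s * ∫⁻ x in s, f x ^ 2 ∂μ := by
      simp only [ENNReal.rpow_two, mul_pow, ← ENNReal.rpow_natCast, ← ENNReal.rpow_mul]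
      norm_num
    _ ≤ μ s * ∫⁻ x, f x ^ 2 ∂μ := by gcongr; exact Measure.restrict_le_self

/-- The likelihood ratio `dN(θ,1)/dN(0,1)`. -/
noncomputable def gaussLR (θ x : ℝ) : ℝ≥0∞ := ENNReal.ofReal (Real.exp (θ * x - θ ^ 2 / 2))

lemma measurable_gaussLR (θ : ℝ) : Measurable (gaussLR θ) := by
  unfold gaussLR; fun_prop

lemma gaussianReal_eq_withDensity_gaussLR (θ : ℝ) :
    gaussianReal θ 1 = (gaussianReal 0 1).withDensity (gaussLR θ) := by
  have hpdf (x : ℝ) :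
      gaussianPDFReal θ 1 x = gaussianPDFReal 0 1 x * Real.exp (θ * x - θ ^ 2 / 2) := by
    simp only [gaussianPDFReal, NNReal.coe_one, mul_one, sub_zero, mul_assoc, ← Real.exp_add]
    congr 2
    ring
  rw [gaussianReal_of_var_ne_zero _ one_ne_zero, gaussianReal_of_var_ne_zero _ one_ne_zero,
    ← withDensity_mul _ (measurable_gaussianPDF 0 1) (measurable_gaussLR θ)]
  congr 1
  ext x
  simp only [Pi.mul_apply, gaussianPDF, gaussLR, hpdf,
    ENNReal.ofReal_mul (gaussianPDFReal_nonneg 0 1 x)]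

lemma lintegral_gaussLR (θ : ℝ) : ∫⁻ x, gaussLR θ x ∂gaussianReal 0 1 = 1 := by
  rw [← setLIntegral_univ, ← withDensity_apply _ MeasurableSet.univ,
    ← gaussianReal_eq_withDensity_gaussLR, measure_univ]

lemma gaussLR_mul_self (θ x : ℝ) :
    gaussLR θ x * gaussLR θ x = ENNReal.ofReal (Real.exp (θ ^ 2)) * gaussLR (2 * θ) x := by
  simp only [gaussLR, ← ENNReal.ofReal_mul (Real.exp_nonneg _), ← Real.exp_add]
  congr 2
  ring

lemma gaussP_eq_withDensity (n : ℕ) (θ : ℝ) :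
    gaussP n θ = (gaussP n 0).withDensity fun y => ∏ i, gaussLR θ (y i) := by
  simp only [gaussP, gaussianReal_eq_withDensity_gaussLR θ]
  exact Measure.pi_withDensity _ (fun _ => measurable_gaussLR θ)
    fun _ => (lintegral_gaussLR θ).trans_ne ENNReal.one_ne_top

lemma lintegral_prod_gaussLR_sq (n : ℕ) (θ : ℝ) :
    ∫⁻ y, (∏ i, gaussLR θ (y i)) ^ 2 ∂gaussP n 0 = ENNReal.ofReal (Real.exp (n * θ ^ 2)) := by
  simp_rw [← Finset.prod_pow, sq, gaussLR_mul_self]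
  rw [gaussP, lintegral_fintype_prod_eq_prod _ fun _ => (measurable_gaussLR _).const_mul _]
  simp_rw [lintegral_const_mul _ (measurable_gaussLR _), lintegral_gaussLR, mul_one]
  rw [Finset.prod_const, Finset.card_univ, Fintype.card_fin,
    ← ENNReal.ofReal_pow (Real.exp_nonneg _), ← Real.exp_nat_mul, sq]

lemma gaussP_sq_le (n : ℕ) (θ : ℝ) {s : Set (Fin n → ℝ)} (hs : MeasurableSet s) :
    gaussP n θ s ^ 2 ≤ gaussP n 0 s * ENNReal.ofReal (Real.exp (n * θ ^ 2)) := by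
  rw [← lintegral_prod_gaussLR_sq, gaussP_eq_withDensity n θ]
  have hL : Measurable fun y : Fin n → ℝ => ∏ i, gaussLR θ (y i) :=
    Finset.measurable_prod _ fun i _ => (measurable_gaussLR θ).comp (measurable_pi_apply i)
  exact withDensity_apply_sq_le _ hL.aemeasurable hs

lemma tendsto_measure_compl_nhds_zero {α : Type*} {X : α → Type*} [∀ a, MeasurableSpace (X a)]
    {l : Filter α} {μ : ∀ a, Measure (X a)} [∀ a, IsProbabilityMeasure (μ a)] {s : ∀ a, Set (X a)}
    (hs : ∀ a, MeasurableSet (s a)) (h : Tendsto (fun a => μ a (s a)) l (𝓝 1)) :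
    Tendsto (fun a => μ a (s a)ᶜ) l (𝓝 0) := by
  simp_rw [prob_compl_eq_one_sub (hs _)]
  simpa using ENNReal.Tendsto.sub tendsto_const_nhds h (Or.inl ENNReal.one_ne_top)

lemma two_inv_le_gaussP (n : ℕ) (θ : ℝ) {s : Set (Fin n → ℝ)} (hs : MeasurableSet s)
    (h : gaussP n 0 sᶜ ≤ (4 * ENNReal.ofReal (Real.exp (n * θ ^ 2)))⁻¹) :
    2⁻¹ ≤ gaussP n θ s := by
  set E := ENNReal.ofReal (Real.exp (n * θ ^ 2))
  have hE : E ≠ 0 := by simp [E, Real.exp_pos]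
  have hcompl : gaussP n θ sᶜ ≤ 2⁻¹ := by
    rw [← ENNReal.pow_le_pow_left_iff two_ne_zero]
    calc gaussP n θ sᶜ ^ 2 ≤ gaussP n 0 sᶜ * E := gaussP_sq_le n θ hs.compl
      _ ≤ (4 * E)⁻¹ * E := by gcongr
      _ = 2⁻¹ ^ 2 := by
        rw [ENNReal.mul_inv (by simp) (by simp [E]), mul_assoc,
          ENNReal.inv_mul_cancel hE ENNReal.ofReal_ne_top, mul_one, ← ENNReal.inv_pow]
        norm_num
  rw [prob_compl_eq_one_sub hs, tsub_le_iff_right, ← ENNReal.inv_two_add_inv_two] at hcompl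
  exact (ENNReal.add_le_add_iff_left (by simp)).mp hcompl

lemma ofReal_le_iSup_risk {n : ℕ} (hn : n ≠ 0) {est : (Fin n → ℝ) → ℝ} (hest : Measurable est)
    {c : ℝ} (hc : 0 ≤ c)
    (hsmall : gaussP n 0 {y | est y = 0}ᶜ ≤ (4 * ENNReal.ofReal (Real.exp (2 * c)))⁻¹) :
    ENNReal.ofReal c ≤
      ⨆ θ : ℝ, ∫⁻ y, ENNReal.ofReal ((n : ℝ) * (est y - θ) ^ 2) ∂(gaussP n θ) := by
  set θ := Real.sqrt (2 * c / n)
  have hθ : (n : ℝ) * θ ^ 2 = 2 * c := by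
    rw [Real.sq_sqrt (by positivity)]
    field_simp
  have hzero : MeasurableSet {y | est y = 0} := hest (measurableSet_singleton 0)
  have hloss : {y | est y = 0} ⊆
      {y | ENNReal.ofReal (2 * c) ≤ ENNReal.ofReal (n * (est y - θ) ^ 2)} := by
    intro y (hy : est y = 0)
    show ENNReal.ofReal (2 * c) ≤ ENNReal.ofReal (n * (est y - θ) ^ 2)
    rw [hy, zero_sub, neg_sq, hθ]
  calc ENNReal.ofReal c = ENNReal.ofReal (2 * c) * 2⁻¹ := by
        rw [ENNReal.ofReal_mul zero_le_two, mul_comm, ← mul_assoc, ENNReal.ofReal_ofNat,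
          ENNReal.inv_mul_cancel two_ne_zero ENNReal.ofNat_ne_top, one_mul]
    _ ≤ ENNReal.ofReal (2 * c) * gaussP n θ {y | est y = 0} := by
        gcongr
        exact two_inv_le_gaussP n θ hzero (by rwa [hθ])
    _ ≤ ENNReal.ofReal (2 * c) *
          gaussP n θ {y | ENNReal.ofReal (2 * c) ≤ ENNReal.ofReal (n * (est y - θ) ^ 2)} := by
        gcongr
    _ ≤ ∫⁻ y, ENNReal.ofReal ((n : ℝ) * (est y - θ) ^ 2) ∂(gaussP n θ) :=
        mul_meas_ge_le_lintegral₀ (by fun_prop) _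
    _ ≤ _ := le_iSup_of_le θ le_rfl

theorem stmt_1
    (est : (n : ℕ) → (Fin n → ℝ) → ℝ)
    (hmeas : ∀ n, Measurable (est n))
    (hsparse : Tendsto (fun n => gaussP n 0 {y | est n y = 0}) atTop (𝓝 1)) :
    Tendsto (fun n : ℕ => ⨆ θ : ℝ,
        ∫⁻ y, ENNReal.ofReal ((n : ℝ) * (est n y - θ) ^ 2) ∂(gaussP n θ))
      atTop (𝓝 ⊤) := by
  rw [ENNReal.tendsto_nhds_top_iff_nnreal]
  intro x
  have hδ : (0 : ℝ≥0∞) < (4 * ENNReal.ofReal (Real.exp (2 * (x + 1 : ℝ))))⁻¹ := by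
    simp [ENNReal.mul_eq_top]
  have hsmall := (tendsto_order.1 (tendsto_measure_compl_nhds_zero
    (fun n => hmeas n (measurableSet_singleton 0)) hsparse)).2 _ hδ
  filter_upwards [hsmall, eventually_ne_atTop 0] with n hn hn0
  calc (x : ℝ≥0∞) < ENNReal.ofReal (x + 1) := by
        rw [ENNReal.ofReal_add x.coe_nonneg zero_le_one, ENNReal.ofReal_coe_nnreal,
          ENNReal.ofReal_one]
        exact ENNReal.lt_add_right ENNReal.coe_ne_top one_ne_zero
    _ ≤ _ := ofReal_le_iSup_risk hn0 (hmeas n) (by positivity) hn.le
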